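/- Let n ≥ 2, R = ℤ/nℤ, and let g = a_0 + a_1 t + ⋯ + a_d t^d be a monic polynomial (a_d = 1) of degree d ≥ 1 with a_0 a unit in R, viewed in R[[t]]. For i = 0,…,d-1 let α_i : R[[t]] → R[[t]] be α_i(p) = p + t^i, and μ(p) = g·p. Then the group generated by α_0,…,α_{d-1}, μ is isomorphic to (ℤ/nℤ)^d ≀ ℤ (the lamplighter group L_{n,d}). -/

import Mathlib

set_option maxHeartbeats 1000000


/-- The shift action of `ℤ` on `⊕_ℤ A` (written multiplicatively). -/
noncomputable def lampAction (A : Type) [AddCommGroup A] :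
    Multiplicative ℤ →* MulAut (Multiplicative (ℤ →₀ A)) where
  toFun k := AddEquiv.toMultiplicative (Finsupp.domCongr (Equiv.addRight k.toAdd))
  map_one' := by
    refine MulEquiv.ext fun f => ?_
    show Multiplicative.ofAdd (Finsupp.equivMapDomain _ (Multiplicative.toAdd f)) = f
    apply congrArg
    ext i
    simp [Finsupp.equivMapDomain_apply]
    rfl
  map_mul' := by
    intro g h
    refine MulEquiv.ext fun f => ?_
    show Multiplicative.ofAdd (Finsupp.equivMapDomain _ (Multiplicative.toAdd f)) = _
    show _ = Multiplicative.ofAdd (Finsupp.equivMapDomain _ (Finsupp.equivMapDomain _ (Multiplicative.toAdd f)))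
    apply congrArg
    ext i
    simp [Finsupp.equivMapDomain_apply, toAdd_mul, Equiv.Perm.mul_def]
    congr 1
    omega

/-- The restricted wreath product `A ≀ ℤ = (⊕_ℤ A) ⋊ ℤ`, with `ℤ` acting by
shifting coordinates. -/
def Lamp (A : Type) [AddCommGroup A] :=
  SemidirectProduct (Multiplicative (ℤ →₀ A)) (Multiplicative ℤ) (lampAction A)

noncomputable instance (A : Type) [AddCommGroup A] : Group (Lamp A) :=
  inferInstanceAs (Group (SemidirectProduct _ _ _))


noncomputable section StmtAux
open PowerSeries Multiplicative

/-- `p` has coefficient 1 in degree `m` and zero above. -/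
def MonTop {R : Type*} [Semiring R] (p : PowerSeries R) (m : ℕ) : Prop :=
  PowerSeries.coeff m p = 1 ∧ ∀ l, m < l → PowerSeries.coeff l p = 0

lemma MonTop.one {R : Type*} [Semiring R] : MonTop (1 : PowerSeries R) 0 := by
  constructor
  · simp
  · intro l hl
    rw [PowerSeries.coeff_one, if_neg (by omega)]

lemma MonTop.mul {R : Type*} [CommSemiring R] {p q : PowerSeries R} {m l : ℕ}
    (hp : MonTop p m) (hq : MonTop q l) : MonTop (p * q) (m + l) := by
  constructor
  · rw [PowerSeries.coeff_mul]
    rw [Finset.sum_eq_single (m, l)]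
    · rw [hp.1, hq.1, one_mul]
    · rintro ⟨x, y⟩ hxy hne
      simp only [Finset.HasAntidiagonal.mem_antidiagonal] at hxy
      rcases lt_or_ge m x with h | h
      · rw [hp.2 x h, zero_mul]
      · have : l < y := by
          rcases h.lt_or_eq with h' | h'
          · omega
          · exfalso; apply hne; subst h'; simp; omega
        rw [hq.2 y this, mul_zero]
    · intro h
      exact absurd (by simp : (m, l) ∈ Finset.HasAntidiagonal.antidiagonal (m + l)) h
  · intro t ht
    rw [PowerSeries.coeff_mul]
    apply Finset.sum_eq_zero
    rintro ⟨x, y⟩ hxy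
    simp only [Finset.HasAntidiagonal.mem_antidiagonal] at hxy
    rcases lt_or_ge m x with h | h
    · rw [hp.2 x h, zero_mul]
    · rw [hq.2 y (by omega), mul_zero]

lemma MonTop.pow {R : Type*} [CommSemiring R] {p : PowerSeries R} {m : ℕ}
    (hp : MonTop p m) : ∀ k : ℕ, MonTop (p ^ k) (k * m)
  | 0 => by simpa using MonTop.one
  | (k + 1) => by
      have := (MonTop.pow hp k).mul hp
      rw [pow_succ]
      have he : (k + 1) * m = k * m + m := by ring
      rw [he]
      exact this

variable {R : Type} [CommRing R] {d : ℕ}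

/-- `v ↦ ∑ i, v i • X^i`. -/
def Pmap (R : Type) [CommRing R] (d : ℕ) : (Fin d → R) →+ PowerSeries R where
  toFun v := ∑ i : Fin d, PowerSeries.C (v i) * PowerSeries.X ^ (i : ℕ)
  map_zero' := by simp
  map_add' v w := by
    show ∑ i : Fin d, _ = _
    rw [← Finset.sum_add_distrib]
    exact Finset.sum_congr rfl fun i _ => by simp [add_mul]

lemma coeff_pow_mul_Pmap (q : PowerSeries R) (v : Fin d → R) (m : ℕ) :
    PowerSeries.coeff m (q * Pmap R d v)
      = ∑ i : Fin d, (if (i : ℕ) ≤ m then PowerSeries.coeff (m - (i:ℕ)) q else 0) * v i := by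
  show PowerSeries.coeff m (q * ∑ i : Fin d, PowerSeries.C (v i) * PowerSeries.X ^ (i : ℕ)) = _
  rw [Finset.mul_sum, map_sum]
  apply Finset.sum_congr rfl
  intro i _
  rw [← mul_assoc, PowerSeries.coeff_mul_X_pow']
  split_ifs with h
  · rw [PowerSeries.coeff_mul_C]
  · rw [zero_mul]

lemma Pmap_single_one (i : Fin d) :
    Pmap R d (Pi.single i (1 : R)) = PowerSeries.X ^ (i : ℕ) := by
  show ∑ j : Fin d, PowerSeries.C ((Pi.single i (1 : R) : Fin d → R) j)
    * PowerSeries.X ^ (j : ℕ) = _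
  rw [Finset.sum_eq_single i]
  · rw [Pi.single_eq_same, map_one, one_mul]
  · intro j _ hj
    rw [Pi.single_eq_of_ne hj, map_zero, zero_mul]
  · intro h; exact absurd (Finset.mem_univ i) h

/-- `f ↦ ∑ k, u^k * Pmap (f k)`. -/
def Bmap (R : Type) [CommRing R] (d : ℕ) (u : (PowerSeries R)ˣ) :
    (ℤ →₀ (Fin d → R)) →+ PowerSeries R :=
  Finsupp.liftAddHom fun k =>
    (AddMonoidHom.mulLeft ((u ^ k : (PowerSeries R)ˣ) : PowerSeries R)).comp (Pmap R d)

lemma Bmap_apply (u : (PowerSeries R)ˣ) (f : ℤ →₀ (Fin d → R)) :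
    Bmap R d u f = f.sum fun k v => ((u ^ k : (PowerSeries R)ˣ) : PowerSeries R) * Pmap R d v :=
  rfl

lemma Bmap_single (u : (PowerSeries R)ˣ) (k : ℤ) (v : Fin d → R) :
    Bmap R d u (Finsupp.single k v) = ((u ^ k : (PowerSeries R)ˣ) : PowerSeries R) * Pmap R d v := by
  rw [Bmap_apply, Finsupp.sum_single_index]
  simp

lemma Bmap_shift (u : (PowerSeries R)ˣ) (k : ℤ) (f : ℤ →₀ (Fin d → R)) :
    Bmap R d u (Finsupp.equivMapDomain (Equiv.addRight k) f)
      = ((u ^ k : (PowerSeries R)ˣ) : PowerSeries R) * Bmap R d u f := by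
  rw [Bmap_apply, Bmap_apply, Finsupp.equivMapDomain_eq_mapDomain,
    Finsupp.sum_mapDomain_index (by simp) (by intros; simp [mul_add]), Finsupp.mul_sum]
  apply Finsupp.sum_congr
  intro j _
  show ((u ^ (j + k) : (PowerSeries R)ˣ) : PowerSeries R) * _ = _
  rw [zpow_add, Units.val_mul, mul_comm ((u^j : (PowerSeries R)ˣ) : PowerSeries R), mul_assoc]

lemma Bmap_injective {g : PowerSeries R} (hg : MonTop g d)
    (u : (PowerSeries R)ˣ) (hu : (u : PowerSeries R) = g) :
    Function.Injective (Bmap R d u) := by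
  classical
  rw [injective_iff_map_eq_zero]
  intro f hf
  by_contra hne
  have hsupp : f.support.Nonempty := Finsupp.support_nonempty_iff.mpr hne
  set k₀ : ℤ := f.support.max' hsupp with hk₀def
  set K : ℕ := (f.support.min' hsupp).natAbs with hKdef
  have hK : ∀ k ∈ f.support, 0 ≤ k + K := by
    intro k hk
    have := f.support.min'_le k hk
    omega
  set e : ℤ → ℕ := fun k => (k + K).toNat with hedef
  have key : ∑ k ∈ f.support, g ^ (e k) * Pmap R d (f k) = 0 := by
    have h2 : ((u ^ (K : ℤ) : (PowerSeries R)ˣ) : PowerSeries R) * Bmap R d u f = 0 := by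
      rw [hf, mul_zero]
    rw [Bmap_apply, Finsupp.mul_sum] at h2
    rw [← h2]
    apply Finset.sum_congr rfl
    intro k hk
    have hnn := hK k hk
    symm
    dsimp only
    rw [← mul_assoc, ← Units.val_mul, ← zpow_add, add_comm (K : ℤ) k]
    congr 1
    rw [show k + (K : ℤ) = ((e k : ℕ) : ℤ) from by simp only [hedef]; omega,
      zpow_natCast, Units.val_pow_eq_pow_val, hu]
  have hfk₀ : f k₀ ≠ 0 := (f.mem_support_iff).mp (f.support.max'_mem hsupp)
  set s : Finset (Fin d) := Finset.univ.filter (fun i => f k₀ i ≠ 0) with hsdef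
  have hs : s.Nonempty := by
    obtain ⟨i, hi⟩ := Function.ne_iff.mp hfk₀
    refine ⟨i, ?_⟩
    simp only [hsdef, Finset.mem_filter, Finset.mem_univ, true_and]
    simpa using hi
  set i₀ : Fin d := s.max' hs with hi₀def
  have hi₀mem : f k₀ i₀ ≠ 0 := by
    have := s.max'_mem hs
    simp [hsdef] at this
    exact this
  set m : ℕ := e k₀ * d + (i₀ : ℕ) with hmdef
  have hcoeff := congrArg (PowerSeries.coeff m) key
  rw [map_sum, map_zero] at hcoeff
  rw [Finset.sum_eq_single k₀] at hcoeff
  · rw [coeff_pow_mul_Pmap, Finset.sum_eq_single i₀] at hcoeff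
    · rw [if_pos (by omega), show m - (i₀ : ℕ) = e k₀ * d by omega,
        (hg.pow (e k₀)).1, one_mul] at hcoeff
      exact hi₀mem hcoeff
    · intro i _ hine
      rcases lt_or_gt_of_ne hine with hlt | hgt
      · have h1 : (i : ℕ) ≤ m := by have := i.isLt; omega
        have h2 : (i : ℕ) < (i₀ : ℕ) := Fin.lt_def.mp hlt
        rw [if_pos h1, (hg.pow (e k₀)).2 (m - (i : ℕ)) (by omega), zero_mul]
      · have : f k₀ i = 0 := by
          by_contra hne2
          have : i ∈ s := by simp [hsdef, hne2]
          exact absurd (s.le_max' i this) (not_le.mpr hgt)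
        rw [this, mul_zero]
    · intro h
      exact absurd (Finset.mem_univ i₀) h
  · intro k hk hkne
    have hklt : k < k₀ := lt_of_le_of_ne (f.support.le_max' k hk) hkne
    have hek : e k + 1 ≤ e k₀ := by
      have h1 := hK k hk
      have h2 := hK k₀ (f.support.max'_mem hsupp)
      simp only [hedef]
      omega
    have hmlb : e k * d + d ≤ m := by
      calc e k * d + d = (e k + 1) * d := by ring
        _ ≤ e k₀ * d := Nat.mul_le_mul_right d hek
        _ ≤ m := hmdef ▸ Nat.le_add_right _ _
    rw [coeff_pow_mul_Pmap]
    apply Finset.sum_eq_zero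
    intro i _
    have hid := i.isLt
    rw [if_pos (by omega), (hg.pow (e k)).2 (m - (i : ℕ)) (by omega), zero_mul]
  · intro h
    exact absurd (f.support.max'_mem hsupp) h

def phi1 (R : Type) [CommRing R] (d : ℕ) (u : (PowerSeries R)ˣ) :
    Multiplicative (ℤ →₀ (Fin d → R)) →* Equiv.Perm (PowerSeries R) where
  toFun f := Equiv.addRight (Bmap R d u f.toAdd)
  map_one' := Equiv.ext fun p => by
    show p + Bmap R d u (toAdd (1 : Multiplicative (ℤ →₀ (Fin d → R)))) = p
    rw [toAdd_one, map_zero, add_zero]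
  map_mul' x y := Equiv.ext fun p => by
    show p + Bmap R d u (toAdd (x * y)) = (p + Bmap R d u y.toAdd) + Bmap R d u x.toAdd
    rw [toAdd_mul, map_add]; ring

def phi2 (R : Type) [CommRing R] (u : (PowerSeries R)ˣ) :
    Multiplicative ℤ →* Equiv.Perm (PowerSeries R) where
  toFun k := Units.mulLeft (u ^ k.toAdd)
  map_one' := Equiv.ext fun p => by
    show ((u ^ toAdd (1 : Multiplicative ℤ) : (PowerSeries R)ˣ) : PowerSeries R) * p = p
    rw [toAdd_one, zpow_zero, Units.val_one, one_mul]
  map_mul' x y := Equiv.ext fun p => by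
    show ((u ^ toAdd (x * y) : (PowerSeries R)ˣ) : PowerSeries R) * p
        = ((u ^ toAdd x : (PowerSeries R)ˣ) : PowerSeries R)
          * (((u ^ toAdd y : (PowerSeries R)ˣ) : PowerSeries R) * p)
    rw [toAdd_mul, zpow_add, Units.val_mul, mul_assoc]

lemma phi_compat (R : Type) [CommRing R] (d : ℕ) (u : (PowerSeries R)ˣ) :
    ∀ k : Multiplicative ℤ,
    (phi1 R d u).comp ((lampAction (Fin d → R)) k).toMonoidHom
      = (MulAut.conj (phi2 R u k)).toMonoidHom.comp (phi1 R d u) :=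
  fun k => MonoidHom.ext fun f => Equiv.ext fun p => by
    show p + Bmap R d u (Finsupp.equivMapDomain (Equiv.addRight k.toAdd) f.toAdd)
        = ((u ^ k.toAdd : (PowerSeries R)ˣ) : PowerSeries R)
          * ((((u ^ k.toAdd)⁻¹ : (PowerSeries R)ˣ) : PowerSeries R) * p + Bmap R d u f.toAdd)
    rw [Bmap_shift, mul_add, Units.mul_inv_cancel_left]

def Phi (R : Type) [CommRing R] (d : ℕ) (u : (PowerSeries R)ˣ) :
    SemidirectProduct (Multiplicative (ℤ →₀ (Fin d → R))) (Multiplicative ℤ)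
      (lampAction (Fin d → R)) →* Equiv.Perm (PowerSeries R) :=
  SemidirectProduct.lift (phi1 R d u) (phi2 R u) (phi_compat R d u)

lemma Phi_apply_pt (u : (PowerSeries R)ˣ)
    (x : SemidirectProduct (Multiplicative (ℤ →₀ (Fin d → R))) (Multiplicative ℤ)
      (lampAction (Fin d → R))) (p : PowerSeries R) :
    Phi R d u x p = ((u ^ (toAdd x.right) : (PowerSeries R)ˣ) : PowerSeries R) * p
      + Bmap R d u (toAdd x.left) := rfl

/-- Identity as a `MulEquiv` between the semidirect product and `Lamp`. -/
def lampEquiv (A : Type) [AddCommGroup A] :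
    SemidirectProduct (Multiplicative (ℤ →₀ A)) (Multiplicative ℤ) (lampAction A) ≃* Lamp A where
  toFun x := x
  invFun x := x
  left_inv _ := rfl
  right_inv _ := rfl
  map_mul' _ _ := rfl

lemma lamp_gen (n d : ℕ) [NeZero n] :
    Subgroup.closure
      ((Set.range fun i : Fin d =>
          (SemidirectProduct.inl
            (Multiplicative.ofAdd (Finsupp.single (0 : ℤ) (Pi.single i (1 : ZMod n)))) :
            SemidirectProduct (Multiplicative (ℤ →₀ (Fin d → ZMod n))) (Multiplicative ℤ)
              (lampAction (Fin d → ZMod n))))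
        ∪ {SemidirectProduct.inr (Multiplicative.ofAdd (1 : ℤ))}) = ⊤ := by
  classical
  set S : Set (SemidirectProduct (Multiplicative (ℤ →₀ (Fin d → ZMod n))) (Multiplicative ℤ)
      (lampAction (Fin d → ZMod n))) :=
    (Set.range fun i : Fin d =>
        (SemidirectProduct.inl
          (Multiplicative.ofAdd (Finsupp.single (0 : ℤ) (Pi.single i (1 : ZMod n))))))
      ∪ {SemidirectProduct.inr (Multiplicative.ofAdd (1 : ℤ))} with hSdef
  rw [eq_top_iff]
  rintro x -
  have hinr : ∀ k : ℤ, SemidirectProduct.inr (Multiplicative.ofAdd k) ∈ Subgroup.closure S := by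
    intro k
    have h1 : (SemidirectProduct.inr (Multiplicative.ofAdd (1:ℤ)) :
        SemidirectProduct (Multiplicative (ℤ →₀ (Fin d → ZMod n))) (Multiplicative ℤ)
          (lampAction (Fin d → ZMod n))) ^ k
        = SemidirectProduct.inr (Multiplicative.ofAdd k) := by
      rw [← map_zpow]
      congr 1
      rw [← ofAdd_zsmul, smul_eq_mul, mul_one]
    rw [← h1]
    exact Subgroup.zpow_mem (Subgroup.closure S) (Subgroup.subset_closure (Or.inr rfl)) k
  have hsingle : ∀ (k : ℤ) (i : Fin d) (c : ZMod n),
      SemidirectProduct.inl (Multiplicative.ofAdd (Finsupp.single k (Pi.single i c)))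
        ∈ Subgroup.closure S := by
    intro k i c
    have hbase : SemidirectProduct.inl
        (Multiplicative.ofAdd (Finsupp.single (0:ℤ) (Pi.single i (1 : ZMod n))))
        ∈ Subgroup.closure S :=
      Subgroup.subset_closure (Or.inl ⟨i, rfl⟩)
    have hpow : (SemidirectProduct.inl (Multiplicative.ofAdd (Finsupp.single (0:ℤ) (Pi.single i c))) :
          SemidirectProduct (Multiplicative (ℤ →₀ (Fin d → ZMod n))) (Multiplicative ℤ)
            (lampAction (Fin d → ZMod n)))
        = (SemidirectProduct.inl
            (Multiplicative.ofAdd (Finsupp.single (0:ℤ) (Pi.single i (1 : ZMod n))))) ^ (c.val) := by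
      have hvc : (Pi.single i c : Fin d → ZMod n)
          = (c.val : ℕ) • (Pi.single i (1 : ZMod n) : Fin d → ZMod n) := by
        ext j
        rcases eq_or_ne j i with rfl | hne
        · simp only [Pi.single_eq_same, Pi.smul_apply]
          rw [nsmul_eq_mul, mul_one, ZMod.natCast_val, ZMod.cast_id]
        · simp [Pi.single_eq_of_ne hne]
      rw [hvc, ← Finsupp.smul_single, ofAdd_nsmul]
      exact map_pow _ _ _
    have hmem0 : SemidirectProduct.inl
        (Multiplicative.ofAdd (Finsupp.single (0:ℤ) (Pi.single i c))) ∈ Subgroup.closure S := by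
      rw [hpow]; exact pow_mem hbase _
    have hshift : (SemidirectProduct.inl (Multiplicative.ofAdd (Finsupp.single k (Pi.single i c))) :
          SemidirectProduct (Multiplicative (ℤ →₀ (Fin d → ZMod n))) (Multiplicative ℤ)
            (lampAction (Fin d → ZMod n)))
        = SemidirectProduct.inr (Multiplicative.ofAdd k)
          * SemidirectProduct.inl (Multiplicative.ofAdd (Finsupp.single (0:ℤ) (Pi.single i c)))
          * SemidirectProduct.inr (Multiplicative.ofAdd k)⁻¹ := by
      rw [← SemidirectProduct.inl_aut]
      congr 1
      symm
      show Multiplicative.ofAdd (Finsupp.equivMapDomain (Equiv.addRight k)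
        (Finsupp.single (0:ℤ) (Pi.single i c : Fin d → ZMod n))) = _
      rw [Finsupp.equivMapDomain_single]
      simp [Equiv.coe_addRight]
    rw [hshift]
    exact mul_mem (mul_mem (hinr k) hmem0) (hinr (-k))
  have hinl : ∀ f : ℤ →₀ (Fin d → ZMod n),
      SemidirectProduct.inl (Multiplicative.ofAdd f) ∈ Subgroup.closure S := by
    intro f
    induction f using Finsupp.induction with
    | zero =>
        have h1 : SemidirectProduct.inl (Multiplicative.ofAdd (0 : ℤ →₀ (Fin d → ZMod n)))
            = (1 : SemidirectProduct (Multiplicative (ℤ →₀ (Fin d → ZMod n))) (Multiplicative ℤ)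
              (lampAction (Fin d → ZMod n))) := by
          rw [ofAdd_zero, map_one]
        rw [h1]; exact one_mem _
    | single_add k v f hkf hv ih =>
        have hsp : (SemidirectProduct.inl (Multiplicative.ofAdd (Finsupp.single k v + f)) :
              SemidirectProduct (Multiplicative (ℤ →₀ (Fin d → ZMod n))) (Multiplicative ℤ)
                (lampAction (Fin d → ZMod n)))
            = SemidirectProduct.inl (Multiplicative.ofAdd (Finsupp.single k v))
              * SemidirectProduct.inl (Multiplicative.ofAdd f) := by
          rw [ofAdd_add, map_mul]
        rw [hsp]
        refine mul_mem ?_ ih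
        have hsum : ∀ t : Finset (Fin d),
            SemidirectProduct.inl (Multiplicative.ofAdd
              (Finsupp.single k (∑ i ∈ t, Pi.single i (v i))))
              ∈ Subgroup.closure S := by
          intro t
          induction t using Finset.induction with
          | empty =>
              rw [Finset.sum_empty, Finsupp.single_zero, ofAdd_zero, map_one]
              exact one_mem _
          | insert j t hj ih2 =>
              rw [Finset.sum_insert hj, Finsupp.single_add, ofAdd_add, map_mul]
              exact mul_mem (hsingle k _ _) ih2
        have h2 := hsum Finset.univ
        rwa [Finset.univ_sum_single] at h2
  rw [← SemidirectProduct.inl_left_mul_inr_right x]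
  exact mul_mem ((ofAdd_toAdd x.left) ▸ hinl (toAdd x.left))
    ((ofAdd_toAdd x.right) ▸ hinr (toAdd x.right))


/-- For `n ≥ 2`, `R = ℤ/nℤ` and a monic polynomial
`g = a_0 + a_1 t + ⋯ + a_d t^d` of degree `d ≥ 1` with `a_0` a unit of `R`,
the group of bijections of `R[[t]]` generated by the translations
`α_i : p ↦ p + t^i` (`0 ≤ i ≤ d-1`) and `μ : p ↦ g·p` is isomorphic to the
lamplighter group `L_{n,d} = (ℤ/nℤ)^d ≀ ℤ`. -/
theorem stmt_8 (n d : ℕ) (hn : 2 ≤ n) (hd : 1 ≤ d)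
    (a : ℕ → ZMod n) (hmonic : a d = 1) (ha0 : IsUnit (a 0))
    (g : PowerSeries (ZMod n))
    (hg : g = ∑ i ∈ Finset.range (d + 1),
      PowerSeries.C (a i) * PowerSeries.X ^ i)
    (α : Fin d → Equiv.Perm (PowerSeries (ZMod n)))
    (hα : ∀ i : Fin d, ⇑(α i) = fun p => p + PowerSeries.X ^ (i : ℕ))
    (μ : Equiv.Perm (PowerSeries (ZMod n)))
    (hμ : ⇑μ = fun p => g * p) :
    Nonempty ((Subgroup.closure (Set.range α ∪ {μ})) ≃* Lamp (Fin d → ZMod n)) := by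
  classical
  haveI : NeZero n := ⟨by omega⟩
  haveI : Fact (1 < n) := ⟨by omega⟩
  -- basic facts about g
  have hgmon : MonTop g d := by
    constructor
    · rw [hg, map_sum, Finset.sum_eq_single d]
      · rw [PowerSeries.coeff_C_mul, PowerSeries.coeff_X_pow, if_pos rfl, mul_one, hmonic]
      · intro i _ hne
        rw [PowerSeries.coeff_C_mul, PowerSeries.coeff_X_pow, if_neg (fun h => hne h.symm),
          mul_zero]
      · intro h; exact absurd (Finset.self_mem_range_succ d) h
    · intro l hl
      rw [hg, map_sum]
      apply Finset.sum_eq_zero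
      intro i hi
      rw [PowerSeries.coeff_C_mul, PowerSeries.coeff_X_pow, if_neg (by
        simp only [Finset.mem_range] at hi; omega), mul_zero]
  have hc0 : PowerSeries.constantCoeff g = a 0 := by
    rw [← PowerSeries.coeff_zero_eq_constantCoeff_apply, hg, map_sum, Finset.sum_eq_single 0]
    · simp
    · intro i _ hne
      rw [PowerSeries.coeff_C_mul, PowerSeries.coeff_X_pow, if_neg (fun h => hne h.symm),
        mul_zero]
    · intro h; exact absurd (Finset.mem_range.mpr (by omega)) h
  have hgU : IsUnit g := PowerSeries.isUnit_iff_constantCoeff.mpr (by rw [hc0]; exact ha0)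
  obtain ⟨u, hu⟩ := hgU
  -- μ has infinite order
  have hpow : ∀ k : ℤ, u ^ k = 1 → k = 0 := by
    intro k hk
    by_contra hkne
    have hm : 1 ≤ k.natAbs := by omega
    have h1 : u ^ (k.natAbs : ℤ) = 1 := by
      rcases Int.natAbs_eq k with h | h
      · rw [← h, hk]
      · rw [show (k.natAbs : ℤ) = -k by omega, zpow_neg, hk, inv_one]
    rw [zpow_natCast] at h1
    have h2 : g ^ k.natAbs = (1 : PowerSeries (ZMod n)) := by
      rw [← hu, ← Units.val_pow_eq_pow_val, h1, Units.val_one]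
    have h3 := (hgmon.pow k.natAbs).1
    have h4 : 1 ≤ k.natAbs * d := Nat.one_le_iff_ne_zero.mpr (Nat.mul_ne_zero (by omega) (by omega))
    rw [h2, PowerSeries.coeff_one, if_neg (by omega)] at h3
    exact one_ne_zero h3.symm
  -- images of the generators
  have hgen1 : ∀ i : Fin d,
      Phi (ZMod n) d u (SemidirectProduct.inl
        (Multiplicative.ofAdd (Finsupp.single (0:ℤ) (Pi.single i (1 : ZMod n))))) = α i := by
    intro i
    apply Equiv.ext; intro p
    rw [Phi_apply_pt, hα i]
    show _ = p + PowerSeries.X ^ (i : ℕ)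
    rw [SemidirectProduct.right_inl, SemidirectProduct.left_inl, toAdd_one, zpow_zero,
      Units.val_one, one_mul, toAdd_ofAdd, Bmap_single, zpow_zero, Units.val_one, one_mul,
      Pmap_single_one]
  have hgen2 : Phi (ZMod n) d u
      (SemidirectProduct.inr (Multiplicative.ofAdd (1 : ℤ))) = μ := by
    apply Equiv.ext; intro p
    rw [Phi_apply_pt, hμ]
    show _ = g * p
    rw [SemidirectProduct.right_inr, SemidirectProduct.left_inr, toAdd_one, map_zero, add_zero,
      toAdd_ofAdd, zpow_one, hu]
  -- injectivity of Phi
  have hinj : Function.Injective (Phi (ZMod n) d u) := by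
    rw [injective_iff_map_eq_one]
    intro x hx
    have hpt : ∀ p : PowerSeries (ZMod n),
        ((u ^ toAdd x.right : (PowerSeries (ZMod n))ˣ) : PowerSeries (ZMod n)) * p
          + Bmap (ZMod n) d u (toAdd x.left) = p := by
      intro p
      rw [← Phi_apply_pt, hx]
      rfl
    have hB0 : Bmap (ZMod n) d u (toAdd x.left) = 0 := by
      have := hpt 0; rwa [mul_zero, zero_add] at this
    have hu1 : ((u ^ toAdd x.right : (PowerSeries (ZMod n))ˣ) : PowerSeries (ZMod n)) = 1 := by
      have := hpt 1; rwa [hB0, add_zero, mul_one] at this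
    have hr : toAdd x.right = 0 := hpow _ (Units.ext hu1)
    have hl : toAdd x.left = 0 := by
      apply Bmap_injective hgmon u hu
      rw [hB0, map_zero]
    apply SemidirectProduct.ext
    · rw [show x.left = Multiplicative.ofAdd (toAdd x.left) from rfl, hl]
      rfl
    · rw [show x.right = Multiplicative.ofAdd (toAdd x.right) from rfl, hr]
      rfl
  -- the range is exactly the given closure
  have hrange : (Phi (ZMod n) d u).range = Subgroup.closure (Set.range α ∪ {μ}) := by
    apply le_antisymm
    · rw [MonoidHom.range_eq_map, ← lamp_gen n d, MonoidHom.map_closure]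
      rw [Subgroup.closure_le]
      rintro x ⟨y, hy, rfl⟩
      rcases hy with ⟨i, rfl⟩ | rfl
      · exact Subgroup.subset_closure (Or.inl ⟨i, (hgen1 i).symm⟩)
      · exact Subgroup.subset_closure (Or.inr (Set.mem_singleton_iff.mpr hgen2))
    · rw [Subgroup.closure_le]
      rintro x (⟨i, rfl⟩ | rfl)
      · exact ⟨_, hgen1 i⟩
      · exact ⟨_, hgen2⟩
  exact ⟨(MulEquiv.subgroupCongr hrange.symm).trans
    ((MonoidHom.ofInjective hinj).symm.trans (lampEquiv (Fin d → ZMod n)))⟩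

end StmtAux
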